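/- Fix n ≥ 1, reals d_i > 0, p_i ∈ (0,1), reals x_i > 0 and B, and suppose c* is a partial-saturation level for LP2. Let κ > 0 and a_i > 0 satisfy B = κ·(1 + Σ_{i∈[n]} a_i/d_i) and x_i = κ·a_i/(p_i·d_i) for all i. Then LP1 with parameters a, d, p has a unique optimal solution (u, q); in it, u(S) = max{ c* − cost(S), 0 } for every S ⊆ [n], and in particular u([n]) = c*. -/

import Mathlib

open Finset
open scoped BigOperators Classical

/-- The probability of the set `S` of items having high value. -/
def pmass (n : ℕ) (p : Fin n → ℝ) (S : Finset (Fin n)) : ℝ :=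
  (∏ i ∈ S, p i) * ∏ i ∈ Sᶜ, (1 - p i)

/-- `cost(S) = Σ_{i ∉ S} d i`. -/
def cost (n : ℕ) (d : Fin n → ℝ) (S : Finset (Fin n)) : ℝ := ∑ i ∈ Sᶜ, d i

/-- The valuation vector of type `S`: `a i + d i` for `i ∈ S` (high) and `a i` otherwise. -/
def vval (n : ℕ) (a d : Fin n → ℝ) (S : Finset (Fin n)) (i : Fin n) : ℝ :=
  if i ∈ S then a i + d i else a i

/-- Feasibility for LP1: (BIC), (IR) and (PROB). -/
def LP1Feasible (n : ℕ) (a d : Fin n → ℝ) (u : Finset (Fin n) → ℝ)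
    (q : Finset (Fin n) → Fin n → ℝ) : Prop :=
  (∀ S T : Finset (Fin n),
      u S ≥ u T + ∑ i, (vval n a d S i - vval n a d T i) * q T i) ∧
  (∀ S : Finset (Fin n), 0 ≤ u S) ∧
  (∀ S : Finset (Fin n), ∀ i, 0 ≤ q S i ∧ q S i ≤ 1)

/-- The LP1 objective (expected revenue). -/
def LP1Obj (n : ℕ) (a d p : Fin n → ℝ) (u : Finset (Fin n) → ℝ)
    (q : Finset (Fin n) → Fin n → ℝ) : ℝ :=
  ∑ S : Finset (Fin n), pmass n p S * ((∑ i, vval n a d S i * q S i) - u S)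

/-!
Write `Δᵢu(S) = u(S ∪ {i}) - u(S)`. BIC between `S ∪ {i}` and `S` gives `dᵢ qᵢ(S) ≤ Δᵢu(S)`, so
the revenue of a feasible `(u, q)` is at most that of `(u, q̂)`, where `q̂ᵢ(S) = 1` for `i ∈ S`
and `q̂ᵢ(S) = Δᵢu(S) / dᵢ` otherwise, with equality only for `q = q̂` since all `aᵢ > 0`.
Reindexing `S ∪ {i}` as `T` and using `p(T ∖ {i}) pᵢ = p(T) (1 - pᵢ)`, the relations between
`B`, `x` and `a, d, p, κ` turn the revenue of `(u, q̂)` into a constant plus `κ⁻¹` times the LP2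
objective of `u`.

In LP2 only `u([n])` has a positive coefficient, and feasibility forces
`u(S) ≥ max(u([n]) - cost(S), 0)`. Hence the LP2 objective is at most a concave piecewise-linear
function of `c = u([n])`, attained by the hinge utility `max(c - cost(S), 0)`; its slope just
below and just above `c*` is `supply - Σ_{cost(S) < c*} cap(S) > 0` and
`supply - Σ_{cost(S) ≤ c*} cap(S) < 0`, so `c*` is its unique maximiser. The hinge utility
together with its `q̂` is LP1-feasible by convexity of `max(·, 0)`.
-/

theorem Finset.sum_sum_compl_insert {α M : Type*} [Fintype α] [DecidableEq α] [AddCommMonoid M]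
    (f : Finset α → α → M) :
    ∑ S, ∑ i ∈ Sᶜ, f (insert i S) i = ∑ T, ∑ i ∈ T, f T i := by
  rw [sum_sigma', sum_sigma']
  refine sum_nbij' (fun x => ⟨insert x.2 x.1, x.2⟩) (fun x => ⟨x.1.erase x.2, x.2⟩)
    ?_ ?_ ?_ ?_ fun _ _ => rfl
  · rintro ⟨S, i⟩ -
    simp
  · rintro ⟨T, i⟩ -
    simp
  · rintro ⟨S, i⟩ h
    simp_all
  · rintro ⟨T, i⟩ h
    simp_all

theorem sum_max_add_sub_max_le {ι : Type*} (U : Finset ι) {t : ι → ℝ} (ht : ∀ i ∈ U, 0 ≤ t i)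
    (m : ℝ) :
    ∑ i ∈ U, (max (m + t i) 0 - max m 0) ≤ max (m + ∑ i ∈ U, t i) 0 - max m 0 := by
  classical
  induction U using Finset.induction_on with
  | empty => simp
  | @insert j U hj ih =>
    rw [sum_insert hj, sum_insert hj]
    have hU : 0 ≤ ∑ i ∈ U, t i := sum_nonneg fun i hi => ht i (mem_insert_of_mem hi)
    have hj0 := ht j (mem_insert_self j U)
    have ihU := ih fun i hi => ht i (mem_insert_of_mem hi)
    -- increments of the convex function `max · 0` grow with the base point
    have hconv : max (m + t j) 0 - max m 0
        ≤ max (m + (t j + ∑ i ∈ U, t i)) 0 - max (m + ∑ i ∈ U, t i) 0 := by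
      simp only [max_def]; split_ifs <;> linarith
    linarith

theorem mul_sub_sum_mul_max_lt_of_ne {ι : Type*} (F : Finset ι) {w k : ι → ℝ} {s c₀ c : ℝ}
    (hw : ∀ i ∈ F, 0 ≤ w i) (hlt : ∑ i ∈ F with k i < c₀, w i < s)
    (hgt : s < ∑ i ∈ F with k i ≤ c₀, w i) (hc : c ≠ c₀) :
    s * c - ∑ i ∈ F, w i * max (c - k i) 0 < s * c₀ - ∑ i ∈ F, w i * max (c₀ - k i) 0 := by
  rw [sum_filter] at hlt hgt
  rcases hc.lt_or_gt with hc | hc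
  · have hsum : ∑ i ∈ F, w i * max (c₀ - k i) 0 - ∑ i ∈ F, w i * max (c - k i) 0
        ≤ (c₀ - c) * ∑ i ∈ F, if k i < c₀ then w i else 0 := by
      rw [← sum_sub_distrib, mul_sum]
      refine sum_le_sum fun i hi => ?_
      have := hw i hi
      split_ifs <;> simp only [max_def] <;> split_ifs <;> nlinarith
    nlinarith [mul_lt_mul_of_pos_left hlt (sub_pos.2 hc)]
  · have hsum : (c - c₀) * ∑ i ∈ F, (if k i ≤ c₀ then w i else 0)
        ≤ ∑ i ∈ F, w i * max (c - k i) 0 - ∑ i ∈ F, w i * max (c₀ - k i) 0 := by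
      rw [← sum_sub_distrib, mul_sum]
      refine sum_le_sum fun i hi => ?_
      have := hw i hi
      split_ifs <;> simp only [max_def] <;> split_ifs <;> nlinarith
    nlinarith [mul_lt_mul_of_pos_left hgt (sub_pos.2 hc)]

section
variable {n : ℕ}

theorem cost_nonneg {d : Fin n → ℝ} (hd : ∀ i, 0 ≤ d i) (S : Finset (Fin n)) :
    0 ≤ cost n d S :=
  sum_nonneg fun i _ => hd i

theorem cost_univ (d : Fin n → ℝ) : cost n d univ = 0 := by
  simp [cost]

theorem cost_insert (d : Fin n → ℝ) {S : Finset (Fin n)} {i : Fin n} (hi : i ∉ S) :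
    cost n d (insert i S) = cost n d S - d i := by
  rw [cost, cost, compl_insert, ← add_sum_erase _ _ (mem_compl.2 hi)]
  ring

theorem cost_eq_cost_sub_add (d : Fin n → ℝ) (S T : Finset (Fin n)) :
    cost n d S = cost n d T - ∑ i ∈ S \ T, d i + ∑ i ∈ T \ S, d i := by
  have h := sum_sdiff_sub_sum_sdiff (s₁ := Sᶜ) (s₂ := Tᶜ) (f := d)
  rw [compl_sdiff_compl, compl_sdiff_compl] at h
  rw [cost, cost]
  linarith

theorem pmass_pos {p : Fin n → ℝ} (hp : ∀ i, p i ∈ Set.Ioo (0 : ℝ) 1) (S : Finset (Fin n)) :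
    0 < pmass n p S :=
  mul_pos (prod_pos fun i _ => (hp i).1) (prod_pos fun i _ => sub_pos.2 (hp i).2)

theorem pmass_erase {p : Fin n → ℝ} (hp : ∀ i, p i ≠ 0) {T : Finset (Fin n)} {i : Fin n}
    (hi : i ∈ T) :
    pmass n p (T.erase i) = pmass n p T * ((1 - p i) / p i) := by
  have hiT : i ∉ Tᶜ := notMem_compl.2 hi
  rw [pmass, pmass, compl_erase, prod_insert hiT, ← mul_prod_erase _ _ hi]
  field_simp [hp i]

theorem sum_vval_sub_mul (a d g : Fin n → ℝ) (S T : Finset (Fin n)) :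
    ∑ i, (vval n a d S i - vval n a d T i) * g i
      = ∑ i ∈ S \ T, d i * g i - ∑ i ∈ T \ S, d i * g i := by
  have hterm : ∀ i, (vval n a d S i - vval n a d T i) * g i
      = (if i ∈ S \ T then d i * g i else 0) - (if i ∈ T \ S then d i * g i else 0) := by
    intro i
    by_cases hS : i ∈ S <;> by_cases hT : i ∈ T <;> simp [vval, hS, hT]
  simp only [hterm, sum_sub_distrib, sum_ite_mem, univ_inter]

def cap (n : ℕ) (p x : Fin n → ℝ) (B : ℝ) (S : Finset (Fin n)) : ℝ :=
  pmass n p S * (B - ∑ i ∈ S, x i)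

def supply (n : ℕ) (p x : Fin n → ℝ) (B : ℝ) : ℝ :=
  pmass n p univ * ((∑ i, x i) - B)

def IsPartialSaturationLevel (n : ℕ) (d p x : Fin n → ℝ) (B c : ℝ) : Prop :=
  (∃ S, S ≠ univ ∧ c = cost n d S) ∧
  ∑ S ∈ univ.filter (fun S => S ≠ univ ∧ cost n d S < c), cap n p x B S < supply n p x B ∧
  supply n p x B < ∑ S ∈ univ.filter (fun S => S ≠ univ ∧ cost n d S ≤ c), cap n p x B S

def LP2Obj (n : ℕ) (p x : Fin n → ℝ) (B : ℝ) (u : Finset (Fin n) → ℝ) : ℝ :=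
  ∑ S, pmass n p S * ((∑ i ∈ S, x i) - B) * u S

def LP2Feasible (n : ℕ) (d : Fin n → ℝ) (u : Finset (Fin n) → ℝ) : Prop :=
  (∀ S i, i ∉ S → u (insert i S) - u S ≤ d i) ∧ ∀ S, 0 ≤ u S

def hingeUtility (n : ℕ) (d : Fin n → ℝ) (c : ℝ) (S : Finset (Fin n)) : ℝ :=
  max (c - cost n d S) 0

def envelope (n : ℕ) (d p x : Fin n → ℝ) (B c : ℝ) : ℝ :=
  supply n p x B * c - ∑ S ∈ univ.filter (· ≠ univ), cap n p x B S * hingeUtility n d c S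

theorem IsPartialSaturationLevel.nonneg {d p x : Fin n → ℝ} {B c : ℝ}
    (hc : IsPartialSaturationLevel n d p x B c) (hd : ∀ i, 0 ≤ d i) : 0 ≤ c := by
  obtain ⟨⟨S, -, rfl⟩, -⟩ := hc
  exact cost_nonneg hd S

theorem cap_pos {p x : Fin n → ℝ} {B : ℝ} (hp : ∀ i, p i ∈ Set.Ioo (0 : ℝ) 1)
    (hneg : ∀ S : Finset (Fin n), S ≠ univ → ∑ i ∈ S, x i < B) {S : Finset (Fin n)}
    (hS : S ≠ univ) : 0 < cap n p x B S :=
  mul_pos (pmass_pos hp S) (sub_pos.2 (hneg S hS))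

theorem hingeUtility_univ (d : Fin n → ℝ) {c : ℝ} (hc : 0 ≤ c) : hingeUtility n d c univ = c := by
  rw [hingeUtility, cost_univ, sub_zero, max_eq_left hc]

theorem hingeUtility_insert (d : Fin n → ℝ) (c : ℝ) {S : Finset (Fin n)} {i : Fin n}
    (hi : i ∉ S) : hingeUtility n d c (insert i S) = max (c - cost n d S + d i) 0 := by
  rw [hingeUtility, cost_insert d hi, sub_sub_eq_add_sub, add_sub_right_comm]

theorem LP2Feasible.le_add_cost {d : Fin n → ℝ} {u : Finset (Fin n) → ℝ} (hu : LP2Feasible n d u)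
    (S : Finset (Fin n)) : u univ ≤ u S + cost n d S := by
  have key : ∀ U : Finset (Fin n), Disjoint S U → u (S ∪ U) ≤ u S + ∑ i ∈ U, d i := by
    intro U
    induction U using Finset.induction_on with
    | empty => simp
    | @insert j U hj ih =>
      intro hSU
      rw [disjoint_insert_right] at hSU
      have hstep := hu.1 (S ∪ U) j (by simp [hSU.1, hj])
      rw [union_insert, sum_insert hj]
      linarith [ih hSU.2]
  simpa [union_compl, cost] using key Sᶜ disjoint_compl_right

theorem LP2Feasible.hingeUtility_le {d : Fin n → ℝ} {u : Finset (Fin n) → ℝ}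
    (hu : LP2Feasible n d u) (S : Finset (Fin n)) : hingeUtility n d (u univ) S ≤ u S :=
  max_le (by linarith [hu.le_add_cost S]) (hu.2 S)

theorem lp2Obj_eq_envelope_sub (d p x : Fin n → ℝ) (B : ℝ) (u : Finset (Fin n) → ℝ) :
    LP2Obj n p x B u = envelope n d p x B (u univ)
      - ∑ S ∈ univ.filter (· ≠ univ), cap n p x B S * (u S - hingeUtility n d (u univ) S) := by
  rw [LP2Obj, ← add_sum_erase _ _ (mem_univ univ), envelope, filter_ne', sub_sub,
    ← sum_add_distrib, sub_eq_add_neg (supply n p x B * _), ← sum_neg_distrib, supply]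
  congr 1
  exact sum_congr rfl fun S _ => by rw [cap]; ring

theorem lp2Obj_le_envelope {d p x : Fin n → ℝ} {B : ℝ} (hp : ∀ i, p i ∈ Set.Ioo (0 : ℝ) 1)
    (hneg : ∀ S : Finset (Fin n), S ≠ univ → ∑ i ∈ S, x i < B) {u : Finset (Fin n) → ℝ}
    (hu : LP2Feasible n d u) : LP2Obj n p x B u ≤ envelope n d p x B (u univ) := by
  rw [lp2Obj_eq_envelope_sub d]
  refine sub_le_self _ (sum_nonneg fun S hS => mul_nonneg (cap_pos hp hneg ?_).le ?_)
  · exact (mem_filter.1 hS).2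
  · exact sub_nonneg.2 (hu.hingeUtility_le S)

theorem eq_hingeUtility_of_lp2Obj_eq_envelope {d p x : Fin n → ℝ} {B : ℝ}
    (hp : ∀ i, p i ∈ Set.Ioo (0 : ℝ) 1)
    (hneg : ∀ S : Finset (Fin n), S ≠ univ → ∑ i ∈ S, x i < B) {u : Finset (Fin n) → ℝ}
    (hu : LP2Feasible n d u) (h : LP2Obj n p x B u = envelope n d p x B (u univ)) :
    u = hingeUtility n d (u univ) := by
  rw [lp2Obj_eq_envelope_sub d, sub_eq_self, sum_eq_zero_iff_of_nonneg] at h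
  · funext S
    by_cases hS : S = univ
    · rw [hS, hingeUtility_univ d (hu.2 univ)]
    · have hzero := h S (mem_filter.2 ⟨mem_univ S, hS⟩)
      rw [mul_eq_zero, sub_eq_zero] at hzero
      exact hzero.resolve_left (cap_pos hp hneg hS).ne'
  · intro S hS
    exact mul_nonneg (cap_pos hp hneg (mem_filter.1 hS).2).le (sub_nonneg.2 (hu.hingeUtility_le S))

theorem lp2Obj_hingeUtility (d p x : Fin n → ℝ) (B : ℝ) {c : ℝ} (hc : 0 ≤ c) :
    LP2Obj n p x B (hingeUtility n d c) = envelope n d p x B c := by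
  rw [lp2Obj_eq_envelope_sub d, hingeUtility_univ d hc]
  simp

theorem envelope_lt_of_ne {d p x : Fin n → ℝ} {B c₀ c : ℝ} (hp : ∀ i, p i ∈ Set.Ioo (0 : ℝ) 1)
    (hneg : ∀ S : Finset (Fin n), S ≠ univ → ∑ i ∈ S, x i < B)
    (hc₀ : IsPartialSaturationLevel n d p x B c₀) (hc : c ≠ c₀) :
    envelope n d p x B c < envelope n d p x B c₀ := by
  obtain ⟨-, hlt, hgt⟩ := hc₀
  rw [← filter_filter] at hlt hgt
  exact mul_sub_sum_mul_max_lt_of_ne _ (fun S hS => (cap_pos hp hneg (mem_filter.1 hS).2).le)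
    hlt hgt hc

theorem lp2Obj_le_hingeUtility {d p x : Fin n → ℝ} {B c : ℝ} (hd : ∀ i, 0 ≤ d i)
    (hp : ∀ i, p i ∈ Set.Ioo (0 : ℝ) 1)
    (hneg : ∀ S : Finset (Fin n), S ≠ univ → ∑ i ∈ S, x i < B)
    (hc : IsPartialSaturationLevel n d p x B c) {u : Finset (Fin n) → ℝ}
    (hu : LP2Feasible n d u) :
    LP2Obj n p x B u ≤ LP2Obj n p x B (hingeUtility n d c) := by
  rw [lp2Obj_hingeUtility d p x B (hc.nonneg hd)]
  refine (lp2Obj_le_envelope hp hneg hu).trans ?_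
  rcases eq_or_ne (u univ) c with h | h
  · rw [h]
  · exact (envelope_lt_of_ne hp hneg hc h).le

theorem eq_hingeUtility_of_lp2Obj_le {d p x : Fin n → ℝ} {B c : ℝ} (hd : ∀ i, 0 ≤ d i)
    (hp : ∀ i, p i ∈ Set.Ioo (0 : ℝ) 1)
    (hneg : ∀ S : Finset (Fin n), S ≠ univ → ∑ i ∈ S, x i < B)
    (hc : IsPartialSaturationLevel n d p x B c) {u : Finset (Fin n) → ℝ}
    (hu : LP2Feasible n d u) (h : LP2Obj n p x B (hingeUtility n d c) ≤ LP2Obj n p x B u) :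
    u = hingeUtility n d c := by
  rw [lp2Obj_hingeUtility d p x B (hc.nonneg hd)] at h
  have hle := lp2Obj_le_envelope hp hneg hu
  have huniv : u univ = c := by
    by_contra hne
    linarith [envelope_lt_of_ne hp hneg hc hne]
  subst huniv
  exact eq_hingeUtility_of_lp2Obj_eq_envelope hp hneg hu (le_antisymm hle h)

noncomputable def inducedAlloc (n : ℕ) (d : Fin n → ℝ) (u : Finset (Fin n) → ℝ) (S : Finset (Fin n))
    (i : Fin n) : ℝ :=
  if i ∈ S then 1 else (u (insert i S) - u S) / d i

noncomputable def allocSlack (n : ℕ) (a d : Fin n → ℝ) (u : Finset (Fin n) → ℝ)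
    (q : Finset (Fin n) → Fin n → ℝ) (S : Finset (Fin n)) (i : Fin n) : ℝ :=
  if i ∈ S then (a i + d i) * (1 - q S i) else a i / d i * (u (insert i S) - u S - d i * q S i)

theorem LP1Feasible.mul_le_sub {a d : Fin n → ℝ} {u : Finset (Fin n) → ℝ}
    {q : Finset (Fin n) → Fin n → ℝ} (hf : LP1Feasible n a d u q) {S : Finset (Fin n)}
    {i : Fin n} (hi : i ∉ S) : d i * q S i ≤ u (insert i S) - u S := by
  have h := hf.1 (insert i S) S
  rw [sum_vval_sub_mul] at h
  simp [hi, sdiff_eq_empty_iff_subset.2 (subset_insert i S)] at h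
  linarith

theorem LP1Feasible.toLP2Feasible {a d : Fin n → ℝ} {u : Finset (Fin n) → ℝ}
    {q : Finset (Fin n) → Fin n → ℝ} (hd : ∀ i, 0 ≤ d i) (hf : LP1Feasible n a d u q) :
    LP2Feasible n d u := by
  refine ⟨fun S i hi => ?_, hf.2.1⟩
  have h := hf.1 S (insert i S)
  rw [sum_vval_sub_mul] at h
  simp [hi, sdiff_eq_empty_iff_subset.2 (subset_insert i S)] at h
  nlinarith [(hf.2.2 (insert i S) i).2, hd i]

theorem vval_mul_eq_sub_allocSlack (a d : Fin n → ℝ) (u : Finset (Fin n) → ℝ)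
    (q : Finset (Fin n) → Fin n → ℝ) (S : Finset (Fin n)) {i : Fin n} (hd : d i ≠ 0) :
    vval n a d S i * q S i
      = vval n a d S i * inducedAlloc n d u S i - allocSlack n a d u q S i := by
  by_cases hi : i ∈ S
  · simp only [vval, inducedAlloc, allocSlack, hi, if_true]
    ring
  · simp only [vval, inducedAlloc, allocSlack, hi, if_false]
    field_simp
    ring

theorem lp1Obj_eq_sub_allocSlack (a d p : Fin n → ℝ) (hd : ∀ i, d i ≠ 0)
    (u : Finset (Fin n) → ℝ) (q : Finset (Fin n) → Fin n → ℝ) :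
    LP1Obj n a d p u q = LP1Obj n a d p u (inducedAlloc n d u)
      - ∑ S, pmass n p S * ∑ i, allocSlack n a d u q S i := by
  rw [LP1Obj, LP1Obj, ← sum_sub_distrib]
  refine sum_congr rfl fun S _ => ?_
  simp only [vval_mul_eq_sub_allocSlack a d u q S (hd _), sum_sub_distrib]
  ring

theorem LP1Feasible.allocSlack_nonneg {a d : Fin n → ℝ} {u : Finset (Fin n) → ℝ}
    {q : Finset (Fin n) → Fin n → ℝ} (ha : ∀ i, 0 ≤ a i) (hd : ∀ i, 0 ≤ d i)
    (hf : LP1Feasible n a d u q) (S : Finset (Fin n)) (i : Fin n) :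
    0 ≤ allocSlack n a d u q S i := by
  by_cases hi : i ∈ S
  · rw [allocSlack, if_pos hi]
    exact mul_nonneg (add_nonneg (ha i) (hd i)) (sub_nonneg.2 (hf.2.2 S i).2)
  · rw [allocSlack, if_neg hi]
    exact mul_nonneg (div_nonneg (ha i) (hd i)) (by linarith [hf.mul_le_sub hi])

theorem eq_inducedAlloc_of_allocSlack_eq_zero {a d : Fin n → ℝ} {u : Finset (Fin n) → ℝ}
    {q : Finset (Fin n) → Fin n → ℝ} (ha : ∀ i, 0 < a i) (hd : ∀ i, 0 < d i)
    {S : Finset (Fin n)} {i : Fin n} (h : allocSlack n a d u q S i = 0) :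
    q S i = inducedAlloc n d u S i := by
  by_cases hi : i ∈ S
  · rw [allocSlack, if_pos hi, mul_eq_zero] at h
    rw [inducedAlloc, if_pos hi]
    linarith [h.resolve_left (by linarith [ha i, hd i])]
  · rw [allocSlack, if_neg hi, mul_eq_zero] at h
    rw [inducedAlloc, if_neg hi, eq_div_iff (hd i).ne']
    linarith [h.resolve_left (div_pos (ha i) (hd i)).ne']

theorem LP1Feasible.sum_allocSlack_nonneg {a d p : Fin n → ℝ} {u : Finset (Fin n) → ℝ}
    {q : Finset (Fin n) → Fin n → ℝ} (ha : ∀ i, 0 ≤ a i) (hd : ∀ i, 0 ≤ d i)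
    (hp : ∀ i, p i ∈ Set.Ioo (0 : ℝ) 1) (hf : LP1Feasible n a d u q) (S : Finset (Fin n)) :
    0 ≤ pmass n p S * ∑ i, allocSlack n a d u q S i :=
  mul_nonneg (pmass_pos hp S).le (sum_nonneg fun i _ => hf.allocSlack_nonneg ha hd S i)

theorem LP1Feasible.lp1Obj_le_inducedAlloc {a d p : Fin n → ℝ} {u : Finset (Fin n) → ℝ}
    {q : Finset (Fin n) → Fin n → ℝ} (ha : ∀ i, 0 < a i) (hd : ∀ i, 0 < d i)
    (hp : ∀ i, p i ∈ Set.Ioo (0 : ℝ) 1) (hf : LP1Feasible n a d u q) :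
    LP1Obj n a d p u q ≤ LP1Obj n a d p u (inducedAlloc n d u) := by
  rw [lp1Obj_eq_sub_allocSlack a d p (fun i => (hd i).ne')]
  exact sub_le_self _ (sum_nonneg fun S _ =>
    hf.sum_allocSlack_nonneg (fun i => (ha i).le) (fun i => (hd i).le) hp S)

theorem LP1Feasible.eq_inducedAlloc_of_lp1Obj_le {a d p : Fin n → ℝ} {u : Finset (Fin n) → ℝ}
    {q : Finset (Fin n) → Fin n → ℝ} (ha : ∀ i, 0 < a i) (hd : ∀ i, 0 < d i)
    (hp : ∀ i, p i ∈ Set.Ioo (0 : ℝ) 1) (hf : LP1Feasible n a d u q)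
    (h : LP1Obj n a d p u (inducedAlloc n d u) ≤ LP1Obj n a d p u q) :
    q = inducedAlloc n d u := by
  have hnonneg := hf.sum_allocSlack_nonneg (fun i => (ha i).le) (fun i => (hd i).le) hp
  rw [lp1Obj_eq_sub_allocSlack a d p (fun i => (hd i).ne') u q, le_sub_self_iff] at h
  have hzero := (sum_eq_zero_iff_of_nonneg fun S _ => hnonneg S).1
    (le_antisymm h (sum_nonneg fun S _ => hnonneg S))
  funext S i
  have hrow := (mul_eq_zero.1 (hzero S (mem_univ S))).resolve_left (pmass_pos hp S).ne'
  refine eq_inducedAlloc_of_allocSlack_eq_zero ha hd ?_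
  exact (sum_eq_zero_iff_of_nonneg fun j _ =>
    hf.allocSlack_nonneg (fun i => (ha i).le) (fun i => (hd i).le) S j).1 hrow i (mem_univ i)

theorem sum_pmass_mul_sum_compl_insert {p : Fin n → ℝ} (hp : ∀ i, p i ≠ 0) (g : Fin n → ℝ)
    (u : Finset (Fin n) → ℝ) :
    ∑ S, pmass n p S * ∑ i ∈ Sᶜ, g i * u (insert i S)
      = ∑ T, pmass n p T * (∑ i ∈ T, (1 - p i) / p i * g i) * u T := by
  calc ∑ S, pmass n p S * ∑ i ∈ Sᶜ, g i * u (insert i S)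
      = ∑ S, ∑ i ∈ Sᶜ, pmass n p ((insert i S).erase i) * g i * u (insert i S) := by
        refine sum_congr rfl fun S _ => ?_
        rw [mul_sum]
        refine sum_congr rfl fun i hi => ?_
        rw [erase_insert (mem_compl.1 hi)]
        ring
    _ = ∑ T, ∑ i ∈ T, pmass n p (T.erase i) * g i * u T :=
        sum_sum_compl_insert fun T i => pmass n p (T.erase i) * g i * u T
    _ = ∑ T, pmass n p T * (∑ i ∈ T, (1 - p i) / p i * g i) * u T := by
        refine sum_congr rfl fun T _ => ?_
        rw [mul_sum, sum_mul]
        refine sum_congr rfl fun i hi => ?_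
        rw [pmass_erase hp hi]
        ring

theorem sum_vval_mul_inducedAlloc (a d : Fin n → ℝ) (u : Finset (Fin n) → ℝ)
    (S : Finset (Fin n)) :
    ∑ i, vval n a d S i * inducedAlloc n d u S i
      = ∑ i ∈ S, (a i + d i) + ∑ i ∈ Sᶜ, a i / d i * u (insert i S)
        - (∑ i ∈ Sᶜ, a i / d i) * u S := by
  have hin : ∀ i ∈ S, vval n a d S i * inducedAlloc n d u S i = a i + d i := fun i hi => by
    simp [vval, inducedAlloc, hi]
  have hout : ∀ i ∈ Sᶜ, vval n a d S i * inducedAlloc n d u S i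
      = a i / d i * u (insert i S) - a i / d i * u S := fun i hi => by
    simp only [vval, inducedAlloc, if_neg (mem_compl.1 hi)]
    ring
  rw [← sum_add_sum_compl S, sum_congr rfl hin, sum_congr rfl hout, sum_sub_distrib, sum_mul]
  ring

theorem lp1Obj_inducedAlloc {a d p x : Fin n → ℝ} {κ B : ℝ} (hd : ∀ i, d i ≠ 0)
    (hp : ∀ i, p i ≠ 0) (hκ : κ ≠ 0) (hBeq : B = κ * (1 + ∑ i, a i / d i))
    (hxeq : ∀ i, x i = κ * a i / (p i * d i)) (u : Finset (Fin n) → ℝ) :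
    LP1Obj n a d p u (inducedAlloc n d u)
      = ∑ S, pmass n p S * ∑ i ∈ S, (a i + d i) + κ⁻¹ * LP2Obj n p x B u := by
  have hcoef : ∀ T : Finset (Fin n), ∑ i ∈ T, (1 - p i) / p i * (a i / d i)
      - (1 + ∑ i ∈ Tᶜ, a i / d i) = κ⁻¹ * ((∑ i ∈ T, x i) - B) := by
    intro T
    have hx : ∀ i ∈ T, (1 - p i) / p i * (a i / d i) = κ⁻¹ * x i - a i / d i := fun i _ => by
      rw [hxeq i]
      field_simp [hp i, hd i]
    rw [sum_congr rfl hx, sum_sub_distrib, ← mul_sum, hBeq, ← sum_add_sum_compl T]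
    field_simp
    ring
  calc LP1Obj n a d p u (inducedAlloc n d u)
      = ∑ S, pmass n p S * ∑ i ∈ S, (a i + d i)
        + (∑ S, pmass n p S * ∑ i ∈ Sᶜ, a i / d i * u (insert i S)
          - ∑ S, pmass n p S * (1 + ∑ i ∈ Sᶜ, a i / d i) * u S) := by
        rw [LP1Obj, ← sum_sub_distrib, ← sum_add_distrib]
        exact sum_congr rfl fun S _ => by rw [sum_vval_mul_inducedAlloc]; ring
    _ = ∑ S, pmass n p S * ∑ i ∈ S, (a i + d i) + κ⁻¹ * LP2Obj n p x B u := by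
        rw [sum_pmass_mul_sum_compl_insert hp, ← sum_sub_distrib, LP2Obj, mul_sum]
        congr 1
        refine sum_congr rfl fun T _ => ?_
        linear_combination pmass n p T * u T * hcoef T

theorem inducedAlloc_hingeUtility_mem_Icc {d : Fin n → ℝ} (hd : ∀ i, 0 < d i) (c : ℝ)
    (S : Finset (Fin n)) (i : Fin n) :
    inducedAlloc n d (hingeUtility n d c) S i ∈ Set.Icc 0 1 := by
  by_cases hi : i ∈ S
  · simp [inducedAlloc, hi]
  · have hdi := hd i
    rw [inducedAlloc, if_neg hi, hingeUtility_insert d c hi, hingeUtility, Set.mem_Icc,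
      div_le_one hdi]
    refine ⟨div_nonneg ?_ hdi.le, ?_⟩ <;> simp only [max_def] <;> split_ifs <;> linarith

theorem hingeUtility_bic (a : Fin n → ℝ) {d : Fin n → ℝ} (hd : ∀ i, 0 < d i) (c : ℝ)
    (S T : Finset (Fin n)) :
    hingeUtility n d c S ≥ hingeUtility n d c T
      + ∑ i, (vval n a d S i - vval n a d T i) * inducedAlloc n d (hingeUtility n d c) T i := by
  obtain ⟨m, hm⟩ : ∃ m, m = c - cost n d T := ⟨_, rfl⟩
  have hT : hingeUtility n d c T = max m 0 := by rw [hingeUtility, hm]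
  have hS : hingeUtility n d c S = max (m + ∑ i ∈ S \ T, d i - ∑ i ∈ T \ S, d i) 0 := by
    rw [hingeUtility, cost_eq_cost_sub_add d S T, hm]
    ring_nf
  have hgain : ∑ i ∈ S \ T, d i * inducedAlloc n d (hingeUtility n d c) T i
      = ∑ i ∈ S \ T, (max (m + d i) 0 - max m 0) := sum_congr rfl fun i hi => by
    have hiT := (mem_sdiff.1 hi).2
    rw [inducedAlloc, if_neg hiT, mul_div_cancel₀ _ (hd i).ne', hingeUtility_insert d c hiT, hT, hm]
  have hloss : ∑ i ∈ T \ S, d i * inducedAlloc n d (hingeUtility n d c) T i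
      = ∑ i ∈ T \ S, d i := sum_congr rfl fun i hi => by
    rw [inducedAlloc, if_pos (mem_sdiff.1 hi).1, mul_one]
  have hsuper := sum_max_add_sub_max_le (S \ T) (fun i _ => (hd i).le) m
  have hlip : max (m + ∑ i ∈ S \ T, d i) 0 - ∑ i ∈ T \ S, d i
      ≤ max (m + ∑ i ∈ S \ T, d i - ∑ i ∈ T \ S, d i) 0 := by
    have : 0 ≤ ∑ i ∈ T \ S, d i := sum_nonneg fun i _ => (hd i).le
    simp only [max_def]; split_ifs <;> linarith
  rw [sum_vval_sub_mul, hgain, hloss, hS, hT, ge_iff_le]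
  linarith

theorem lp1Feasible_hingeUtility (a : Fin n → ℝ) {d : Fin n → ℝ} (hd : ∀ i, 0 < d i) (c : ℝ) :
    LP1Feasible n a d (hingeUtility n d c) (inducedAlloc n d (hingeUtility n d c)) :=
  ⟨hingeUtility_bic a hd c, fun _ => le_max_right _ _, inducedAlloc_hingeUtility_mem_Icc hd c⟩

end

theorem stmt_5_general (n : ℕ) (a d p x : Fin n → ℝ) (κ B : ℝ)
    (ha : ∀ i, 0 < a i) (hd : ∀ i, 0 < d i) (hp : ∀ i, p i ∈ Set.Ioo (0:ℝ) 1)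
    (hκ : 0 < κ)
    (hBeq : B = κ * (1 + ∑ i, a i / d i))
    (hxeq : ∀ i, x i = κ * a i / (p i * d i))
    (hneg : ∀ S : Finset (Fin n), S ≠ Finset.univ → ∑ i ∈ S, x i < B)
    (cstar : ℝ)
    (hcs : ∃ Sstar : Finset (Fin n), Sstar ≠ Finset.univ ∧ cstar = cost n d Sstar)
    (hsat1 :
      ∑ S ∈ Finset.univ.filter
          (fun S : Finset (Fin n) => S ≠ Finset.univ ∧ cost n d S < cstar),
          pmass n p S * (B - ∑ i ∈ S, x i)
        < pmass n p Finset.univ * ((∑ i, x i) - B))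
    (hsat2 :
      pmass n p Finset.univ * ((∑ i, x i) - B)
        < ∑ S ∈ Finset.univ.filter
            (fun S : Finset (Fin n) => S ≠ Finset.univ ∧ cost n d S ≤ cstar),
            pmass n p S * (B - ∑ i ∈ S, x i)) :
    ∃ q : Finset (Fin n) → Fin n → ℝ,
      LP1Feasible n a d (fun S => max (cstar - cost n d S) 0) q ∧
      (∀ u' q', LP1Feasible n a d u' q' →
          LP1Obj n a d p u' q' ≤ LP1Obj n a d p (fun S => max (cstar - cost n d S) 0) q) ∧
      (∀ u' q', LP1Feasible n a d u' q' →
          LP1Obj n a d p u' q' = LP1Obj n a d p (fun S => max (cstar - cost n d S) 0) q →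
          u' = (fun S => max (cstar - cost n d S) 0) ∧ q' = q) ∧
      max (cstar - cost n d Finset.univ) 0 = cstar := by
  have hc : IsPartialSaturationLevel n d p x B cstar := ⟨hcs, hsat1, hsat2⟩
  have hd₀ : ∀ i, 0 ≤ d i := fun i => (hd i).le
  set u₀ := hingeUtility n d cstar
  have hobj := lp1Obj_inducedAlloc (fun i => (hd i).ne') (fun i => (hp i).1.ne') hκ.ne' hBeq hxeq
  have hchain : ∀ u q, LP1Feasible n a d u q →
      LP1Obj n a d p u q ≤ LP1Obj n a d p u (inducedAlloc n d u) ∧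
      LP1Obj n a d p u (inducedAlloc n d u) ≤ LP1Obj n a d p u₀ (inducedAlloc n d u₀) := by
    intro u q hf
    refine ⟨hf.lp1Obj_le_inducedAlloc ha hd hp, ?_⟩
    rw [hobj, hobj]
    gcongr
    exact lp2Obj_le_hingeUtility hd₀ hp hneg hc (hf.toLP2Feasible hd₀)
  refine ⟨inducedAlloc n d u₀, lp1Feasible_hingeUtility a hd cstar,
    fun u q hf => (hchain u q hf).1.trans (hchain u q hf).2, fun u q hf heq => ?_,
    hingeUtility_univ d (hc.nonneg hd₀)⟩
  change _ = LP1Obj n a d p u₀ (inducedAlloc n d u₀) at heq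
  obtain ⟨hq_le, hu_le⟩ := hchain u q hf
  have hq := hf.eq_inducedAlloc_of_lp1Obj_le ha hd hp (hu_le.trans heq.ge)
  have hLP2 : LP2Obj n p x B u₀ ≤ LP2Obj n p x B u := by
    have h := heq.ge.trans hq_le
    rw [hobj, hobj, add_le_add_iff_left] at h
    exact le_of_mul_le_mul_left h (inv_pos.2 hκ)
  obtain rfl := eq_hingeUtility_of_lp2Obj_le hd₀ hp hneg hc (hf.toLP2Feasible hd₀) hLP2
  exact ⟨rfl, hq⟩

theorem stmt_5 (n : ℕ) (hn : 1 ≤ n) (a d p x : Fin n → ℝ) (κ B : ℝ)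
    (ha : ∀ i, 0 < a i) (hd : ∀ i, 0 < d i) (hp : ∀ i, p i ∈ Set.Ioo (0:ℝ) 1)
    (hx : ∀ i, 0 < x i) (hκ : 0 < κ)
    (hBeq : B = κ * (1 + ∑ i, a i / d i))
    (hxeq : ∀ i, x i = κ * a i / (p i * d i))
    (hpos : B < ∑ i, x i)
    (hneg : ∀ S : Finset (Fin n), S ≠ Finset.univ → ∑ i ∈ S, x i < B)
    (cstar : ℝ)
    (hcs : ∃ Sstar : Finset (Fin n), Sstar ≠ Finset.univ ∧ cstar = cost n d Sstar)
    (hsat1 :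
      ∑ S ∈ Finset.univ.filter
          (fun S : Finset (Fin n) => S ≠ Finset.univ ∧ cost n d S < cstar),
          pmass n p S * (B - ∑ i ∈ S, x i)
        < pmass n p Finset.univ * ((∑ i, x i) - B))
    (hsat2 :
      pmass n p Finset.univ * ((∑ i, x i) - B)
        < ∑ S ∈ Finset.univ.filter
            (fun S : Finset (Fin n) => S ≠ Finset.univ ∧ cost n d S ≤ cstar),
            pmass n p S * (B - ∑ i ∈ S, x i)) :
    ∃ q : Finset (Fin n) → Fin n → ℝ,
      LP1Feasible n a d (fun S => max (cstar - cost n d S) 0) q ∧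
      (∀ u' q', LP1Feasible n a d u' q' →
          LP1Obj n a d p u' q' ≤ LP1Obj n a d p (fun S => max (cstar - cost n d S) 0) q) ∧
      (∀ u' q', LP1Feasible n a d u' q' →
          LP1Obj n a d p u' q' = LP1Obj n a d p (fun S => max (cstar - cost n d S) 0) q →
          u' = (fun S => max (cstar - cost n d S) 0) ∧ q' = q) ∧
      max (cstar - cost n d Finset.univ) 0 = cstar :=
  stmt_5_general n a d p x κ B ha hd hp hκ hBeq hxeq hneg cstar hcs hsat1 hsat2
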